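/- arXiv:1703.04106 — 4 statements merged into one kernel-verified Lean document; each statement's English description precedes it below -/
import Mathlib

section
/- If H_{r-1} is a parity check matrix of a binary linear code of length n_{r-1} with minimum distance d_{r-1} ≥ 4, then the code with parity check matrix H_r obtained by the doubling construction (length 2·n_{r-1}) has minimum distance exactly 4. -/
/-!
Write a codeword of the doubled code as `(a, b)`. The all-ones check row says that `b` has even
weight, and the rows `[H | H]` say that `a + b` lies in the code of `H`. If `a + b ≠ 0`, then
`wt a + wt b ≥ wt (a + b) ≥ 4`; otherwise `a = b` is a nonzero word of even weight, so the
weight is `2 · wt b ≥ 4`. Conversely `(u, u)` is a codeword of weight 4 for any `u` of weight 2.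
-/

/-- The doubling construction: `H_r = [[0…0 | 1…1], [H | H]]`. -/
def doubling {r n : ℕ} (H : Matrix (Fin r) (Fin n) (ZMod 2)) :
    Matrix (Unit ⊕ Fin r) (Fin n ⊕ Fin n) (ZMod 2) :=
  Matrix.of fun i j =>
    match i, j with
    | Sum.inl _, Sum.inl _ => 0
    | Sum.inl _, Sum.inr _ => 1
    | Sum.inr i, Sum.inl j => H i j
    | Sum.inr i, Sum.inr j => H i j

open Finset Matrix

section Hamming

variable {ι κ : Type*} [Fintype ι] [Fintype κ]

theorem hammingNorm_sumElim {β : Type*} [Zero β] [DecidableEq β] (x : ι → β) (y : κ → β) :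
    hammingNorm (Sum.elim x y) = hammingNorm x + hammingNorm y := by
  simp only [hammingNorm, Finset.card_filter, Fintype.sum_sum_type, Sum.elim_inl, Sum.elim_inr]
  rfl

theorem hammingNorm_add_le {β : Type*} [AddZeroClass β] [DecidableEq β] (x y : ι → β) :
    hammingNorm (x + y) ≤ hammingNorm x + hammingNorm y := by
  classical
  refine (card_le_card fun i hi => ?_).trans (card_union_le _ _)
  simp only [mem_filter, mem_univ, true_and, mem_union, Pi.add_apply] at hi ⊢
  by_contra! h
  simp [h.1, h.2] at hi

theorem ZMod.sum_two_eq_hammingNorm (x : ι → ZMod 2) : ∑ i, x i = (hammingNorm x : ZMod 2) := by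
  rw [hammingNorm, Finset.card_filter, Nat.cast_sum]
  refine Finset.sum_congr rfl fun i _ => ?_
  generalize x i = a
  fin_cases a <;> rfl

theorem two_le_hammingNorm_of_sum_eq_zero {x : ι → ZMod 2} (hsum : ∑ i, x i = 0) (hx : x ≠ 0) :
    2 ≤ hammingNorm x := by
  rw [ZMod.sum_two_eq_hammingNorm, ZMod.natCast_eq_zero_iff] at hsum
  have := hammingNorm_pos_iff.2 hx
  omega

theorem hammingNorm_single_add_single [DecidableEq ι] {i j : ι} (hij : i ≠ j) :
    hammingNorm (Pi.single i 1 + Pi.single j 1 : ι → ZMod 2) = 2 := by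
  refine (congrArg card ?_).trans (card_pair hij)
  ext k
  by_cases hi : k = i <;> by_cases hj : k = j <;> simp_all [Pi.single_apply]

end Hamming

theorem doubling_mulVec_sumElim {r n : ℕ} (H : Matrix (Fin r) (Fin n) (ZMod 2))
    (a b : Fin n → ZMod 2) :
    doubling H *ᵥ Sum.elim a b = Sum.elim (fun _ => ∑ j, b j) (H *ᵥ (a + b)) := by
  ext (_ | i) <;>
    simp [doubling, mulVec, dotProduct, Fintype.sum_sum_type, mul_add, sum_add_distrib]

theorem four_le_hammingNorm_of_doubling_mulVec_eq_zero {r n : ℕ}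
    {H : Matrix (Fin r) (Fin n) (ZMod 2)}
    (hd : ∀ x : Fin n → ZMod 2, H *ᵥ x = 0 → x ≠ 0 → 4 ≤ hammingNorm x)
    {y : Fin n ⊕ Fin n → ZMod 2} (hy : doubling H *ᵥ y = 0) (hy0 : y ≠ 0) :
    4 ≤ hammingNorm y := by
  obtain ⟨a, b, rfl⟩ : ∃ a b, y = Sum.elim a b := ⟨_, _, (Sum.elim_comp_inl_inr y).symm⟩
  rw [doubling_mulVec_sumElim] at hy
  have hb : ∑ j, b j = 0 := congrFun hy (Sum.inl ())
  have hab : H *ᵥ (a + b) = 0 := funext fun i => congrFun hy (Sum.inr i)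
  rw [hammingNorm_sumElim]
  by_cases hab0 : a + b = 0
  · obtain rfl : a = b := (eq_neg_of_add_eq_zero_left hab0).trans (ZModModule.neg_eq_self b)
    have ha0 : a ≠ 0 := by
      rintro rfl
      exact hy0 Sum.elim_zero_zero
    have := two_le_hammingNorm_of_sum_eq_zero hb ha0
    omega
  · exact (hd _ hab hab0).trans (hammingNorm_add_le a b)

theorem exists_doubling_mulVec_eq_zero_hammingNorm_eq_four {r n : ℕ} (hn : 2 ≤ n)
    (H : Matrix (Fin r) (Fin n) (ZMod 2)) :
    ∃ y : Fin n ⊕ Fin n → ZMod 2, doubling H *ᵥ y = 0 ∧ y ≠ 0 ∧ hammingNorm y = 4 := by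
  obtain ⟨i, j, hij⟩ := Fintype.exists_pair_of_one_lt_card (α := Fin n)
    (by rw [Fintype.card_fin]; omega)
  set u : Fin n → ZMod 2 := Pi.single i 1 + Pi.single j 1
  have hu : hammingNorm u = 2 := hammingNorm_single_add_single hij
  have hy : hammingNorm (Sum.elim u u) = 4 := by rw [hammingNorm_sumElim, hu]
  refine ⟨Sum.elim u u, ?_, ?_, hy⟩
  · rw [doubling_mulVec_sumElim, ZModModule.add_self, mulVec_zero,
      ZMod.sum_two_eq_hammingNorm, hu]
    exact Sum.elim_zero_zero
  · rw [← hammingNorm_ne_zero_iff, hy]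
    norm_num

/-- If the code with parity check matrix `H` has minimum distance ≥ 4 (and length ≥ 2),
then the doubled code has minimum distance exactly 4. -/
theorem stmt_0 {r n : ℕ} (hn : 2 ≤ n) (H : Matrix (Fin r) (Fin n) (ZMod 2))
    (hd : ∀ x : Fin n → ZMod 2, Matrix.mulVec H x = 0 → x ≠ 0 → 4 ≤ hammingNorm x) :
    (∀ y : Fin n ⊕ Fin n → ZMod 2,
        Matrix.mulVec (doubling H) y = 0 → y ≠ 0 → 4 ≤ hammingNorm y) ∧
    (∃ y : Fin n ⊕ Fin n → ZMod 2,
        Matrix.mulVec (doubling H) y = 0 ∧ y ≠ 0 ∧ hammingNorm y = 4) :=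
  ⟨fun _ => four_le_hammingNorm_of_doubling_mulVec_eq_zero hd,
    exists_doubling_mulVec_eq_zero_hammingNorm_eq_four hn H⟩
end

section
/- For an [n, n-r, d] binary linear code with weight spectrum A_0, …, A_n, the number S_ρ of weight-ρ erasure patterns correctable by the code satisfies S_ρ ≥ C(n,ρ) − Σ_{w=d}^{ρ} A_w · C(n−w, ρ−w) for all d ≤ ρ ≤ r. -/
/-- An erasure pattern `s` is correctable by the code with parity check matrix `H` iff
the columns of `H` indexed by `s` are linearly independent, i.e. no nonzero codeword is
supported inside `s`. -/
def Correctable {r n : ℕ} (H : Matrix (Fin r) (Fin n) (ZMod 2)) (s : Finset (Fin n)) :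
    Prop :=
  ∀ x : Fin n → ZMod 2, (∀ i, i ∉ s → x i = 0) → Matrix.mulVec H x = 0 → x = 0

/-!
A non-correctable pattern of size `ρ` contains the support of a nonzero codeword, whose
weight `w` lies between `d` and `ρ`. A fixed support of size `w` lies in at most
`C(n - w, ρ - w)` patterns of size `ρ`, so the union bound over all codewords of weight
`d ≤ w ≤ ρ` bounds the non-correctable patterns by `∑ A_w C(n - w, ρ - w)`; the correctable
ones are the rest of the `C(n, ρ)` patterns.
-/

open Finset

theorem Finset.card_filter_powersetCard_superset_le {α : Type*} [Fintype α] [DecidableEq α]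
    (t : Finset α) (ρ : ℕ) :
    #{s ∈ powersetCard ρ (univ : Finset α) | t ⊆ s} ≤
      (Fintype.card α - #t).choose (ρ - #t) := by
  calc #{s ∈ powersetCard ρ (univ : Finset α) | t ⊆ s}
      ≤ #(powersetCard (ρ - #t) (univ \ t)) := by
        refine card_le_card_of_injOn (· \ t) (fun s hs => ?_) (fun s₁ hs₁ s₂ hs₂ h => ?_)
        · rw [mem_coe, mem_filter, mem_powersetCard] at hs
          rw [mem_coe, mem_powersetCard]
          exact ⟨sdiff_subset_sdiff (subset_univ s) le_rfl,
            by rw [card_sdiff_of_subset hs.2, hs.1.2]⟩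
        · rw [mem_coe, mem_filter] at hs₁ hs₂
          rw [← sdiff_union_of_subset hs₁.2, ← sdiff_union_of_subset hs₂.2]
          exact congrArg (· ∪ t) h
    _ = (Fintype.card α - #t).choose (ρ - #t) := by
        rw [card_powersetCard, card_sdiff_of_subset (subset_univ t), card_univ]

namespace ParityCheck

open scoped Classical

variable {r n : ℕ} (H : Matrix (Fin r) (Fin n) (ZMod 2))

/-- Its cardinality is the weight-spectrum entry `A_w`. -/
def codewordsOfWeight (w : ℕ) : Finset (Fin n → ZMod 2) :=
  {x | H.mulVec x = 0 ∧ hammingNorm x = w}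

theorem natCard_codeword_weight_eq (w : ℕ) :
    Nat.card {x : Fin n → ZMod 2 // H.mulVec x = 0 ∧ hammingNorm x = w} =
      #(codewordsOfWeight H w) := by
  rw [Nat.card_eq_fintype_card, Fintype.card_subtype, codewordsOfWeight]

theorem natCard_correctable_eq (ρ : ℕ) :
    Nat.card {s : Finset (Fin n) // s.card = ρ ∧ Correctable H s} =
      #{s ∈ powersetCard ρ univ | Correctable H s} := by
  rw [Nat.card_eq_fintype_card, Fintype.card_subtype]
  congr 1
  ext s
  simp

theorem exists_codeword_support_subset_of_not_correctable {s : Finset (Fin n)}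
    (hs : ¬ Correctable H s) :
    ∃ x, H.mulVec x = 0 ∧ x ≠ 0 ∧ ({i | x i ≠ 0} : Finset (Fin n)) ⊆ s := by
  simp only [Correctable, not_forall] at hs
  obtain ⟨x, hsupp, hx, hx0⟩ := hs
  refine ⟨x, hx, hx0, fun i hi => ?_⟩
  by_contra his
  exact (mem_filter.mp hi).2 (hsupp i his)

theorem card_not_correctable_le {d : ℕ}
    (hd : ∀ x : Fin n → ZMod 2, H.mulVec x = 0 → x ≠ 0 → d ≤ hammingNorm x) (ρ : ℕ) :
    #{s ∈ powersetCard ρ univ | ¬ Correctable H s} ≤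
      ∑ w ∈ Icc d ρ, #(codewordsOfWeight H w) * (n - w).choose (ρ - w) := by
  set patternsAbove : (Fin n → ZMod 2) → Finset (Finset (Fin n)) :=
    fun x => {s ∈ powersetCard ρ univ | ({i | x i ≠ 0} : Finset (Fin n)) ⊆ s}
  have hcover : {s ∈ powersetCard ρ (univ : Finset (Fin n)) | ¬ Correctable H s} ⊆
      (Icc d ρ).biUnion fun w => (codewordsOfWeight H w).biUnion patternsAbove := by
    intro s hs
    obtain ⟨hsρ, hs⟩ := mem_filter.mp hs
    obtain ⟨x, hx, hx0, hxs⟩ := exists_codeword_support_subset_of_not_correctable H hs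
    have hwρ : hammingNorm x ≤ ρ := (card_le_card hxs).trans (mem_powersetCard.mp hsρ).2.le
    simp only [mem_biUnion]
    exact ⟨hammingNorm x, mem_Icc.mpr ⟨hd x hx hx0, hwρ⟩, x,
      mem_filter.mpr ⟨mem_univ x, hx, rfl⟩, mem_filter.mpr ⟨hsρ, hxs⟩⟩
  calc #{s ∈ powersetCard ρ univ | ¬ Correctable H s}
      ≤ #((Icc d ρ).biUnion fun w => (codewordsOfWeight H w).biUnion patternsAbove) :=
        card_le_card hcover
    _ ≤ ∑ w ∈ Icc d ρ, #((codewordsOfWeight H w).biUnion patternsAbove) := card_biUnion_le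
    _ ≤ ∑ w ∈ Icc d ρ, #(codewordsOfWeight H w) * (n - w).choose (ρ - w) := by
        refine sum_le_sum fun w _ => card_biUnion_le_card_mul _ _ _ fun x hx => ?_
        have hxw : #({i | x i ≠ 0} : Finset (Fin n)) = w := (mem_filter.mp hx).2.2
        simpa [hxw] using card_filter_powersetCard_superset_le {i | x i ≠ 0} ρ

end ParityCheck

theorem stmt_10_general {r n d ρ : ℕ} (H : Matrix (Fin r) (Fin n) (ZMod 2))
    (hd1 : ∀ x : Fin n → ZMod 2, Matrix.mulVec H x = 0 → x ≠ 0 → d ≤ hammingNorm x) :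
    (Nat.choose n ρ : ℤ) -
      ∑ w ∈ Finset.Icc d ρ,
        (Nat.card {x : Fin n → ZMod 2 //
            Matrix.mulVec H x = 0 ∧ hammingNorm x = w} : ℤ) *
          Nat.choose (n - w) (ρ - w) ≤
    (Nat.card {s : Finset (Fin n) // s.card = ρ ∧ Correctable H s} : ℤ) := by
  classical
  have hsplit := card_filter_add_card_filter_not (s := powersetCard ρ (univ : Finset (Fin n)))
    (Correctable H)
  rw [card_powersetCard, card_univ, Fintype.card_fin] at hsplit
  have hbound := ParityCheck.card_not_correctable_le H hd1 ρ
  simp only [ParityCheck.natCard_codeword_weight_eq, ParityCheck.natCard_correctable_eq]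
  zify at hsplit hbound
  linarith

/-- For an `[n, n-r, d]` binary code, the number `S_ρ` of correctable erasure patterns of
weight `ρ` satisfies `S_ρ ≥ C(n,ρ) − ∑_{w=d}^{ρ} A_w C(n−w, ρ−w)` for `d ≤ ρ ≤ r`. -/
theorem stmt_10 {r n d ρ : ℕ} (H : Matrix (Fin r) (Fin n) (ZMod 2))
    (hd1 : ∀ x : Fin n → ZMod 2, Matrix.mulVec H x = 0 → x ≠ 0 → d ≤ hammingNorm x)
    (hd2 : ∃ x : Fin n → ZMod 2, Matrix.mulVec H x = 0 ∧ x ≠ 0 ∧ hammingNorm x = d)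
    (hρ1 : d ≤ ρ) (hρ2 : ρ ≤ r) :
    (Nat.choose n ρ : ℤ) -
      ∑ w ∈ Finset.Icc d ρ,
        (Nat.card {x : Fin n → ZMod 2 //
            Matrix.mulVec H x = 0 ∧ hammingNorm x = w} : ℤ) *
          Nat.choose (n - w) (ρ - w) ≤
    (Nat.card {s : Finset (Fin n) // s.card = ρ ∧ Correctable H s} : ℤ) :=
  stmt_10_general H hd1
end

section
/- For an [n, n-r, d] binary linear code and ρ satisfying d ≤ ρ ≤ d + (d−1)/2, the number S_ρ of correctable weight-ρ erasure patterns equals exactly C(n,ρ) − Σ_{w=d}^{ρ} A_w · C(n−w, ρ−w). -/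
open Finset

section Aux



variable {n : ℕ}

/-- support of a vector as a finset -/
def suppF (x : Fin n → ZMod 2) : Finset (Fin n) := Finset.univ.filter (fun i => x i ≠ 0)

lemma suppF_card (x : Fin n → ZMod 2) : (suppF x).card = hammingNorm x := by
  simp [suppF, hammingNorm]

lemma suppF_subset_iff (x : Fin n → ZMod 2) (s : Finset (Fin n)) :
    (∀ i, i ∉ s → x i = 0) ↔ suppF x ⊆ s := by
  constructor
  · intro h i hi
    simp only [suppF, mem_filter, mem_univ, true_and] at hi
    by_contra hs
    exact hi (h i hs)
  · intro h i hi
    by_contra hx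
    exact hi (h (by simp [suppF, hx]))

lemma card_superset (t : Finset (Fin n)) (w p : ℕ) (ht : t.card = w) (hw : w ≤ p) :
    (Finset.univ.filter fun s : Finset (Fin n) => s.card = p ∧ t ⊆ s).card
      = (n - w).choose (p - w) := by
  rw [show (n - w).choose (p - w) = (tᶜ.powersetCard (p - w)).card by
    rw [card_powersetCard, card_compl, Fintype.card_fin, ht]]
  apply Finset.card_bij' (fun s _ => s \ t) (fun u _ => u ∪ t)
  · intro s hs
    simp only [mem_filter, mem_univ, true_and] at hs
    rw [mem_powersetCard]
    constructor
    · intro i hi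
      simp only [mem_sdiff] at hi
      simp [mem_compl, hi.2]
    · rw [card_sdiff_of_subset hs.2, hs.1, ht]
  · intro u hu
    rw [mem_powersetCard] at hu
    have hdisj : Disjoint u t := by
      rw [Finset.disjoint_left]
      intro a ha hat
      have := hu.1 ha
      simp only [mem_compl] at this
      exact this hat
    simp only [mem_filter, mem_univ, true_and]
    refine ⟨?_, subset_union_right⟩
    rw [card_union_of_disjoint hdisj, hu.2, ht]
    omega
  · intro s hs
    simp only [mem_filter, mem_univ, true_and] at hs
    exact sdiff_union_of_subset hs.2
  · intro u hu
    rw [mem_powersetCard] at hu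
    have hdisj : Disjoint u t := by
      rw [Finset.disjoint_left]
      intro a ha hat
      have := hu.1 ha
      simp only [mem_compl] at this
      exact this hat
    exact union_sdiff_cancel_right hdisj

lemma key_unique {r d ρ : ℕ} (H : Matrix (Fin r) (Fin n) (ZMod 2))
    (hd1 : ∀ x : Fin n → ZMod 2, Matrix.mulVec H x = 0 → x ≠ 0 → d ≤ hammingNorm x)
    (hρ2 : ρ ≤ d + (d - 1) / 2) (hd0 : 1 ≤ d)
    {x y : Fin n → ZMod 2} (hx : Matrix.mulVec H x = 0) (hy : Matrix.mulVec H y = 0)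
    (hx0 : x ≠ 0) (hy0 : y ≠ 0) (hxy : x ≠ y)
    {s : Finset (Fin n)} (hs : s.card = ρ) (hxs : suppF x ⊆ s) (hys : suppF y ⊆ s) :
    False := by
  set z := x + y with hz
  have hzc : Matrix.mulVec H z = 0 := by
    rw [hz, Matrix.mulVec_add, hx, hy, add_zero]
  have hz0 : z ≠ 0 := by
    intro h
    apply hxy
    funext i
    have : x i + y i = 0 := by
      have := congrFun h i
      simpa [hz] using this
    revert this
    revert hxy
    generalize x i = a
    generalize y i = b
    intro _
    revert a b
    decide
  have hdz : d ≤ hammingNorm z := hd1 z hzc hz0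
  have hdx : d ≤ hammingNorm x := hd1 x hx hx0
  have hdy : d ≤ hammingNorm y := hd1 y hy hy0
  set A := suppF x
  set B := suppF y
  have hD : suppF z = (A ∪ B) \ (A ∩ B) := by
    ext i
    simp only [suppF, A, B, mem_filter, mem_univ, true_and, mem_sdiff, mem_union, mem_inter, hz,
      Pi.add_apply]
    generalize x i = a
    generalize y i = b
    revert a b
    decide
  have h1 : (A ∪ B).card + (A ∩ B).card = A.card + B.card := card_union_add_card_inter A B
  have h2 : (suppF z).card + (A ∩ B).card = (A ∪ B).card := by
    rw [hD, card_sdiff_of_subset (inter_subset_union)]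
    have := card_le_card (inter_subset_union (s := A) (t := B))
    omega
  have h3 : (A ∪ B).card ≤ ρ := by
    rw [← hs]; exact card_le_card (union_subset hxs hys)
  rw [suppF_card] at h2
  have hA : d ≤ A.card := by rw [suppF_card]; exact hdx
  have hB : d ≤ B.card := by rw [suppF_card]; exact hdy
  omega

end Aux

/-- For an `[n, n-r, d]` binary code and `d ≤ ρ ≤ d + (d−1)/2`, the number of
correctable weight-`ρ` erasure patterns equals exactly
`C(n,ρ) − ∑_{w=d}^{ρ} A_w C(n−w, ρ−w)`. -/
theorem stmt_11 {r n d ρ : ℕ} (H : Matrix (Fin r) (Fin n) (ZMod 2))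
    (hd1 : ∀ x : Fin n → ZMod 2, Matrix.mulVec H x = 0 → x ≠ 0 → d ≤ hammingNorm x)
    (hd2 : ∃ x : Fin n → ZMod 2, Matrix.mulVec H x = 0 ∧ x ≠ 0 ∧ hammingNorm x = d)
    (hρ1 : d ≤ ρ) (hρ2 : ρ ≤ d + (d - 1) / 2) :
    (Nat.card {s : Finset (Fin n) // s.card = ρ ∧ Correctable H s} : ℤ) =
    (Nat.choose n ρ : ℤ) -
      ∑ w ∈ Finset.Icc d ρ,
        (Nat.card {x : Fin n → ZMod 2 //
            Matrix.mulVec H x = 0 ∧ hammingNorm x = w} : ℤ) *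
          Nat.choose (n - w) (ρ - w) := by
  classical
  have hd0 : 1 ≤ d := by
    obtain ⟨x0, hc, hne, hnorm⟩ := hd2
    have : hammingNorm x0 ≠ 0 := by
      simpa [hammingNorm_eq_zero] using hne
    omega
  set F : Finset (Finset (Fin n)) := univ.filter (fun s => s.card = ρ) with hF
  have hFcard : F.card = n.choose ρ := by
    have h : F = powersetCard ρ (univ : Finset (Fin n)) := by
      ext s; simp [hF, Finset.mem_powersetCard_univ]
    rw [h, card_powersetCard, card_univ, Fintype.card_fin]
  have hsplit : (F.filter (fun s => Correctable H s)).card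
      + (F.filter (fun s => ¬ Correctable H s)).card = F.card :=
    Finset.card_filter_add_card_filter_not _
  set X : Finset (Fin n → ZMod 2) :=
    univ.filter (fun x => Matrix.mulVec H x = 0 ∧ x ≠ 0 ∧ hammingNorm x ≤ ρ) with hX
  have hBad : F.filter (fun s => ¬ Correctable H s)
      = X.biUnion (fun x => univ.filter (fun s => s.card = ρ ∧ suppF x ⊆ s)) := by
    ext s
    simp only [hF, hX, mem_biUnion, mem_filter, mem_univ, true_and, filter_filter]
    constructor
    · rintro ⟨hcard, hnc⟩
      rw [Correctable] at hnc
      push_neg at hnc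
      obtain ⟨x, hsupp, hcw, hx0⟩ := hnc
      have hsub : suppF x ⊆ s := (suppF_subset_iff x s).1 hsupp
      refine ⟨x, ⟨hcw, hx0, ?_⟩, hcard, hsub⟩
      rw [← suppF_card]
      calc (suppF x).card ≤ s.card := card_le_card hsub
        _ = ρ := hcard
    · rintro ⟨x, ⟨hcw, hx0, _⟩, hcard, hsub⟩
      refine ⟨hcard, ?_⟩
      intro hc
      exact hx0 (hc x ((suppF_subset_iff x s).2 hsub) hcw)
  have hdisj : ∀ x ∈ X, ∀ y ∈ X, x ≠ y →
      Disjoint (univ.filter (fun s : Finset (Fin n) => s.card = ρ ∧ suppF x ⊆ s))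
        (univ.filter (fun s : Finset (Fin n) => s.card = ρ ∧ suppF y ⊆ s)) := by
    intro x hx y hy hxy
    rw [Finset.disjoint_left]
    intro s hsx hsy
    simp only [hX, mem_filter, mem_univ, true_and] at hx hy hsx hsy
    exact key_unique H hd1 hρ2 hd0 hx.1 hy.1 hx.2.1 hy.2.1 hxy hsx.1 hsx.2 hsy.2
  have hBcard : (F.filter (fun s => ¬ Correctable H s)).card
      = ∑ x ∈ X, (n - hammingNorm x).choose (ρ - hammingNorm x) := by
    rw [hBad, card_biUnion hdisj]
    apply Finset.sum_congr rfl
    intro x hx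
    simp only [hX, mem_filter, mem_univ, true_and] at hx
    exact card_superset (suppF x) (hammingNorm x) ρ (suppF_card x) hx.2.2
  have hmaps : ∀ x ∈ X, hammingNorm x ∈ Finset.Icc d ρ := by
    intro x hx
    simp only [hX, mem_filter, mem_univ, true_and] at hx
    rw [Finset.mem_Icc]
    exact ⟨hd1 x hx.1 hx.2.1, hx.2.2⟩
  have hfiber : ∑ x ∈ X, (n - hammingNorm x).choose (ρ - hammingNorm x)
      = ∑ w ∈ Finset.Icc d ρ,
          (univ.filter (fun x => Matrix.mulVec H x = 0 ∧ hammingNorm x = w)).card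
            * (n - w).choose (ρ - w) := by
    rw [← Finset.sum_fiberwise_of_maps_to hmaps
      (fun x => (n - hammingNorm x).choose (ρ - hammingNorm x))]
    apply Finset.sum_congr rfl
    intro w hw
    rw [Finset.mem_Icc] at hw
    have hfe : X.filter (fun x => hammingNorm x = w)
        = univ.filter (fun x => Matrix.mulVec H x = 0 ∧ hammingNorm x = w) := by
      ext x
      simp only [hX, mem_filter, mem_univ, true_and, filter_filter]
      constructor
      · rintro ⟨⟨h1, _, _⟩, h4⟩; exact ⟨h1, h4⟩
      · rintro ⟨h1, h4⟩
        have hx0 : x ≠ 0 := by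
          intro h
          rw [h, hammingNorm_zero] at h4
          omega
        exact ⟨⟨h1, hx0, by omega⟩, h4⟩
    rw [hfe]
    have hcg : ∀ x ∈ univ.filter (fun x => Matrix.mulVec H x = 0 ∧ hammingNorm x = w),
        (n - hammingNorm x).choose (ρ - hammingNorm x) = (n - w).choose (ρ - w) := by
      intro x hx
      simp only [mem_filter] at hx
      rw [hx.2.2]
    rw [Finset.sum_congr rfl hcg, Finset.sum_const, smul_eq_mul]
  have hS : (Nat.card {s : Finset (Fin n) // s.card = ρ ∧ Correctable H s})
      = (F.filter (fun s => Correctable H s)).card := by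
    rw [Nat.card_eq_fintype_card, Fintype.card_subtype]
    congr 1
    rw [hF, filter_filter]
  have hA : ∀ w : ℕ, (Nat.card {x : Fin n → ZMod 2 //
        Matrix.mulVec H x = 0 ∧ hammingNorm x = w})
      = (univ.filter (fun x => Matrix.mulVec H x = 0 ∧ hammingNorm x = w)).card := by
    intro w
    rw [Nat.card_eq_fintype_card, Fintype.card_subtype]
  have hnat : (F.filter (fun s => Correctable H s)).card
      + ∑ w ∈ Finset.Icc d ρ,
          (univ.filter (fun x => Matrix.mulVec H x = 0 ∧ hammingNorm x = w)).card
            * (n - w).choose (ρ - w) = n.choose ρ := by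
    rw [← hfiber, ← hBcard, hsplit, hFcard]
  have hcast := congrArg (Nat.cast : ℕ → ℤ) hnat
  push_cast at hcast
  rw [hS]
  simp_rw [hA]
  push_cast
  linarith [hcast]
end

section
/- In a binary code with minimum distance d, if two distinct nonzero codewords both have weight at most ρ where ρ ≤ d + (d−1)/2, then their supports cannot both be contained in a common set of ρ coordinates. -/
/-- In a binary code of minimum distance `d`, if `ρ ≤ d + (d−1)/2` then the supports of
two distinct nonzero codewords of weight at most `ρ` cannot both be contained in a
common set of `ρ` coordinates. -/
theorem stmt_13 {r n d ρ : ℕ} (H : Matrix (Fin r) (Fin n) (ZMod 2))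
    (hd : ∀ x : Fin n → ZMod 2, Matrix.mulVec H x = 0 → x ≠ 0 → d ≤ hammingNorm x)
    (hρ : ρ ≤ d + (d - 1) / 2)
    (c₁ c₂ : Fin n → ZMod 2)
    (hc₁ : Matrix.mulVec H c₁ = 0) (hc₂ : Matrix.mulVec H c₂ = 0)
    (h1 : c₁ ≠ 0) (h2 : c₂ ≠ 0) (hne : c₁ ≠ c₂)
    (hw₁ : hammingNorm c₁ ≤ ρ) (hw₂ : hammingNorm c₂ ≤ ρ) :
    ∀ s : Finset (Fin n), s.card = ρ →
      ¬((∀ i, c₁ i ≠ 0 → i ∈ s) ∧ (∀ i, c₂ i ≠ 0 → i ∈ s)) := by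
  intro s hs ⟨hs1, hs2⟩
  have hc : Matrix.mulVec H (c₁ - c₂) = 0 := by
    rw [Matrix.mulVec_sub, hc₁, hc₂, sub_zero]
  have hcne : c₁ - c₂ ≠ 0 := sub_ne_zero.mpr hne
  have hdle : d ≤ hammingNorm (c₁ - c₂) := hd _ hc hcne
  have hd1 : d ≤ hammingNorm c₁ := hd _ hc₁ h1
  have hd2 : d ≤ hammingNorm c₂ := hd _ hc₂ h2
  classical
  set A : Finset (Fin n) := {i | c₁ i ≠ 0} with hA
  set B : Finset (Fin n) := {i | c₂ i ≠ 0} with hB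
  set D : Finset (Fin n) := {i | (c₁ - c₂) i ≠ 0} with hDdef
  have hnA : hammingNorm c₁ = A.card := rfl
  have hnB : hammingNorm c₂ = B.card := rfl
  have hnD : hammingNorm (c₁ - c₂) = D.card := rfl
  have hAs : A ⊆ s := fun i hi => hs1 i (by simpa [hA] using hi)
  have hBs : B ⊆ s := fun i hi => hs2 i (by simpa [hB] using hi)
  have hUs : A ∪ B ⊆ s := Finset.union_subset hAs hBs
  have hU : (A ∪ B).card ≤ ρ := hs ▸ Finset.card_le_card hUs
  have hD : D = (A ∪ B) \ (A ∩ B) := by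
    ext i
    simp only [hDdef, hA, hB, Finset.mem_filter, Finset.mem_sdiff, Finset.mem_union,
      Finset.mem_inter, Finset.mem_univ, true_and, Pi.sub_apply]
    have : ∀ x y : ZMod 2, x - y ≠ 0 ↔ ((x ≠ 0 ∨ y ≠ 0) ∧ ¬(x ≠ 0 ∧ y ≠ 0)) := by decide
    exact this _ _
  have hcardD : D.card = (A ∪ B).card - (A ∩ B).card := by
    rw [hD, Finset.card_sdiff_of_subset]
    exact Finset.inter_subset_union
  have hsum : (A ∪ B).card + (A ∩ B).card = A.card + B.card :=
    Finset.card_union_add_card_inter A B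
  rw [hnD, hcardD] at hdle
  rw [hnA] at hd1 hw₁
  rw [hnB] at hd2 hw₂
  have hApos : 0 < hammingNorm c₁ := hammingNorm_pos_iff.mpr h1
  rw [hnA] at hApos
  set a := A.card; set b := B.card; set u := (A ∪ B).card; set v := (A ∩ B).card
  clear_value a b u v
  clear hd hc₁ hc₂ hc hcne hD hA hB hDdef hnA hnB hnD hAs hBs hUs
  omega
end
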